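/- Suppose every third-order partial derivative of the Walker metric functions A, B, C involving only the variables v and V vanishes, i.e. ∂_v^i ∂_V^j F = 0 for each F ∈ {A, B, C} and all i, j ≥ 0 with i + j = 3. Let m ≥ 1 and let η : ℝ⁴ → ℝ be smooth with ∂_v^i ∂_V^j η = 0 for all i + j = m. Then ∂_v^i ∂_V^j (D' η) = 0 and ∂_v^i ∂_V^j (δ η) = 0 for all i + j = m + 1, where D' = ∂_u − A ∂_v − (1/2) C ∂_V and δ = −∂_U + B ∂_V + (1/2) C ∂_v. -/

import Mathlib

noncomputable section

/-- Real-valued functions on ℝ⁴, with coordinates `x 0 = u`, `x 1 = v`, `x 2 = U`, `x 3 = V`. -/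
abbrev Fn : Type := (Fin 4 → ℝ) → ℝ

/-- Partial derivative in the `i`-th coordinate direction. -/
def pd (i : Fin 4) (f : Fn) : Fn :=
  fun x => lineDeriv ℝ f x (Pi.single i 1)

/-- ∂/∂u -/ def pu : Fn → Fn := pd 0
/-- ∂/∂v -/ def pv : Fn → Fn := pd 1
/-- ∂/∂U -/ def pU : Fn → Fn := pd 2
/-- ∂/∂V -/ def pV : Fn → Fn := pd 3

/-- The frame directional derivative D' = ∂_u − A ∂_v − (1/2) C ∂_V. -/
def Dp (A C : Fn) (f : Fn) : Fn :=
  fun x => pu f x - A x * pv f x - (1/2) * C x * pV f x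

/-- The frame directional derivative δ = −∂_U + B ∂_V + (1/2) C ∂_v. -/
def delta (B C : Fn) (f : Fn) : Fn :=
  fun x => -(pU f x) + B x * pV f x + (1/2) * C x * pv f x

section Aux

variable {f g : Fn}

lemma pd_apply_fderiv (hf : ContDiff ℝ (⊤ : ℕ∞) f) (i : Fin 4) (x : Fin 4 → ℝ) :
    pd i f x = fderiv ℝ f x (Pi.single i 1) :=
  ((hf.differentiable (by simp)) x).lineDeriv_eq_fderiv

lemma pd_eq_fderiv (hf : ContDiff ℝ (⊤ : ℕ∞) f) (i : Fin 4) :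
    pd i f = fun x => fderiv ℝ f x (Pi.single i 1) :=
  funext fun x => pd_apply_fderiv hf i x

lemma pd_contDiff (hf : ContDiff ℝ (⊤ : ℕ∞) f) (i : Fin 4) : ContDiff ℝ (⊤ : ℕ∞) (pd i f) := by
  rw [pd_eq_fderiv hf]
  exact (hf.fderiv_right (by simp)).clm_apply contDiff_const

lemma pd_zero (h : ∀ x, f x = 0) (i : Fin 4) (x : Fin 4 → ℝ) : pd i f x = 0 := by
  have hf : f = fun _ => (0 : ℝ) := funext h
  rw [pd, hf]
  simp [lineDeriv]

lemma pd_add (hf : ContDiff ℝ (⊤ : ℕ∞) f) (hg : ContDiff ℝ (⊤ : ℕ∞) g) (i : Fin 4) (x : Fin 4 → ℝ) :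
    pd i (fun y => f y + g y) x = pd i f x + pd i g x := by
  rw [pd_apply_fderiv (hf.add hg) i, pd_apply_fderiv hf i, pd_apply_fderiv hg i,
    fderiv_fun_add ((hf.differentiable (by simp)) x) ((hg.differentiable (by simp)) x)]
  simp

lemma pd_mul (hf : ContDiff ℝ (⊤ : ℕ∞) f) (hg : ContDiff ℝ (⊤ : ℕ∞) g) (i : Fin 4) (x : Fin 4 → ℝ) :
    pd i (fun y => f y * g y) x = pd i f x * g x + f x * pd i g x := by
  rw [pd_apply_fderiv (hf.mul hg) i, pd_apply_fderiv hf i, pd_apply_fderiv hg i,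
    fderiv_fun_mul ((hf.differentiable (by simp)) x) ((hg.differentiable (by simp)) x)]
  simp [smul_eq_mul]
  ring

lemma pd_comm (hf : ContDiff ℝ (⊤ : ℕ∞) f) (i j : Fin 4) :
    pd i (pd j f) = pd j (pd i f) := by
  have hd1 : Differentiable ℝ (fderiv ℝ f) :=
    (hf.fderiv_right (m := 1) (WithTop.coe_le_coe.mpr le_top)).differentiable one_ne_zero
  have key : ∀ v w : Fin 4 → ℝ, ∀ x, fderiv ℝ (fun y => fderiv ℝ f y w) x v
      = fderiv ℝ (fderiv ℝ f) x v w := by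
    intro v w x
    rw [fderiv_clm_apply (hd1 x) (differentiableAt_const w)]
    simp
  have hsym : ∀ x, IsSymmSndFDerivAt ℝ f x := fun x =>
    hf.contDiffAt.isSymmSndFDerivAt (by rw [minSmoothness_of_isRCLikeNormedField]; exact WithTop.coe_le_coe.mpr le_top)
  funext x
  rw [pd_eq_fderiv hf j, pd_eq_fderiv hf i]
  have hj : ContDiff ℝ (⊤ : ℕ∞) (fun y => fderiv ℝ f y (Pi.single j 1)) :=
    (hf.fderiv_right (by simp)).clm_apply contDiff_const
  have hi : ContDiff ℝ (⊤ : ℕ∞) (fun y => fderiv ℝ f y (Pi.single i 1)) :=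
    (hf.fderiv_right (by simp)).clm_apply contDiff_const
  rw [pd, pd, ((hj.differentiable (by simp)) x).lineDeriv_eq_fderiv,
    ((hi.differentiable (by simp)) x).lineDeriv_eq_fderiv, key, key]
  exact hsym x _ _

end Aux

section Iter

variable {f g : Fn}

lemma it_contDiff (a : Fin 4) (n : ℕ) (hf : ContDiff ℝ (⊤ : ℕ∞) f) :
    ContDiff ℝ (⊤ : ℕ∞) ((pd a)^[n] f) := by
  induction n with
  | zero => simpa using hf
  | succ n ih => rw [Function.iterate_succ_apply']; exact pd_contDiff ih a

lemma it_zero (a : Fin 4) (n : ℕ) (h : ∀ x, f x = 0) :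
    ∀ x, ((pd a)^[n] f) x = 0 := by
  induction n with
  | zero => simpa using h
  | succ n ih => intro x; rw [Function.iterate_succ_apply']; exact pd_zero ih a x

lemma it_add (a : Fin 4) (n : ℕ) (hf : ContDiff ℝ (⊤ : ℕ∞) f) (hg : ContDiff ℝ (⊤ : ℕ∞) g) :
    (pd a)^[n] (fun y => f y + g y) = fun x => (pd a)^[n] f x + (pd a)^[n] g x := by
  induction n with
  | zero => simp
  | succ n ih =>
      rw [Function.iterate_succ_apply', ih, Function.iterate_succ_apply',
        Function.iterate_succ_apply']
      exact funext fun x => pd_add (it_contDiff a n hf) (it_contDiff a n hg) a x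

lemma it_comm (a i : Fin 4) (n : ℕ) (hf : ContDiff ℝ (⊤ : ℕ∞) f) :
    (pd a)^[n] (pd i f) = pd i ((pd a)^[n] f) := by
  induction n with
  | zero => simp
  | succ n ih =>
      rw [Function.iterate_succ_apply', ih, pd_comm (it_contDiff a n hf) a i,
        Function.iterate_succ_apply']

lemma pv_def : pv = pd 1 := rfl
lemma pV_def : pV = pd 3 := rfl

lemma dd_zero (i j : ℕ) (h : ∀ x, f x = 0) :
    ∀ x, (pv^[i] (pV^[j] f)) x = 0 := by
  rw [pv_def, pV_def]; exact it_zero 1 i (it_zero 3 j h)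

lemma dd_add (i j : ℕ) (hf : ContDiff ℝ (⊤ : ℕ∞) f) (hg : ContDiff ℝ (⊤ : ℕ∞) g) :
    ∀ x, (pv^[i] (pV^[j] (fun y => f y + g y))) x
      = (pv^[i] (pV^[j] f)) x + (pv^[i] (pV^[j] g)) x := by
  intro x
  rw [pv_def, pV_def, it_add 3 j hf hg, it_add 1 i (it_contDiff 3 j hf) (it_contDiff 3 j hg)]

lemma dd_pd (i j : ℕ) (k : Fin 4) (hf : ContDiff ℝ (⊤ : ℕ∞) f) :
    pv^[i] (pV^[j] (pd k f)) = pd k (pv^[i] (pV^[j] f)) := by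
  rw [pv_def, pV_def, it_comm 3 k j hf, it_comm 1 k i (it_contDiff 3 j hf)]

/-- All (v,V)-derivatives of total order `m` vanish. -/
def Flat (m : ℕ) (f : Fn) : Prop :=
  ∀ i j : ℕ, i + j = m → ∀ x, (pv^[i] (pV^[j] f)) x = 0

lemma flat_zero_fun (m : ℕ) (h : ∀ x, f x = 0) : Flat m f :=
  fun i j _ x => dd_zero i j h x

lemma flat_succ {m : ℕ} (h : Flat m f) : Flat (m + 1) f := by
  intro i j hij x
  cases i with
  | zero =>
      have hj : j = m + 1 := by omega
      subst hj
      have h0 : ∀ y, (pV^[m] f) y = 0 := h 0 m (by omega)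
      simp only [Function.iterate_zero, id_eq, Function.iterate_succ_apply']
      exact pd_zero h0 3 x
  | succ i =>
      have h0 : ∀ y, (pv^[i] (pV^[j] f)) y = 0 := h i j (by omega)
      rw [Function.iterate_succ_apply']
      exact pd_zero h0 1 x

lemma flat_pv {m : ℕ} (hf : ContDiff ℝ (⊤ : ℕ∞) f) (h : Flat (m + 1) f) : Flat m (pv f) := by
  intro i j hij x
  have h1 : pV^[j] (pv f) = pv (pV^[j] f) := by
    rw [pv_def, pV_def]; exact it_comm 3 1 j hf
  rw [h1, ← Function.iterate_succ_apply]
  exact h (i+1) j (by omega) x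

lemma flat_pV {m : ℕ} (h : Flat (m + 1) f) : Flat m (pV f) := by
  intro i j hij x
  rw [← Function.iterate_succ_apply]
  exact h i (j+1) (by omega) x

lemma flat_add {m : ℕ} (hf : ContDiff ℝ (⊤ : ℕ∞) f) (hg : ContDiff ℝ (⊤ : ℕ∞) g)
    (h1 : Flat m f) (h2 : Flat m g) : Flat m (fun y => f y + g y) := by
  intro i j hij x
  rw [dd_add i j hf hg, h1 i j hij x, h2 i j hij x, add_zero]

end Iter

section Mul

variable {f g : Fn}

lemma pd_const (c : ℝ) (i : Fin 4) (x : Fin 4 → ℝ) : pd i (fun _ => c) x = 0 := by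
  simp [pd, lineDeriv]

lemma flat_one_const (c : ℝ) : Flat 1 (fun _ => c) := by
  intro i j hij x
  cases i with
  | zero =>
      have hj : j = 1 := by omega
      subst hj
      simpa [pV_def] using pd_const c 3 x
  | succ i =>
      have : i = 0 ∧ j = 0 := by omega
      obtain ⟨rfl, rfl⟩ := this
      simpa [pv_def] using pd_const c 1 x

lemma flat_mul (n : ℕ) : ∀ (p q : ℕ) (f g : Fn), ContDiff ℝ (⊤ : ℕ∞) f → ContDiff ℝ (⊤ : ℕ∞) g →
    Flat p f → Flat q g → p + q = n + 1 → Flat n (fun y => f y * g y) := by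
  induction n with
  | zero =>
      intro p q f g hf hg hp hq hpq i j hij x
      obtain ⟨rfl, rfl⟩ : i = 0 ∧ j = 0 := by omega
      simp only [Function.iterate_zero, id_eq]
      rcases Nat.eq_zero_or_pos p with hp0 | hp0
      · subst hp0
        have := hp 0 0 rfl x
        simp only [Function.iterate_zero, id_eq] at this
        rw [this, zero_mul]
      · have hq0 : q = 0 := by omega
        subst hq0
        have := hq 0 0 rfl x
        simp only [Function.iterate_zero, id_eq] at this
        rw [this, mul_zero]
  | succ n ih =>
      intro p q f g hf hg hp hq hpq
      rcases Nat.eq_zero_or_pos p with hp0 | hp0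
      · subst hp0
        refine flat_zero_fun _ fun x => ?_
        have := hp 0 0 rfl x
        simp only [Function.iterate_zero, id_eq] at this
        rw [this, zero_mul]
      rcases Nat.eq_zero_or_pos q with hq0 | hq0
      · subst hq0
        refine flat_zero_fun _ fun x => ?_
        have := hq 0 0 rfl x
        simp only [Function.iterate_zero, id_eq] at this
        rw [this, mul_zero]
      obtain ⟨p', rfl⟩ : ∃ p', p = p' + 1 := ⟨p - 1, by omega⟩
      obtain ⟨q', rfl⟩ : ∃ q', q = q' + 1 := ⟨q - 1, by omega⟩
      have hpVf : ContDiff ℝ (⊤ : ℕ∞) (pV f) := by rw [pV_def]; exact pd_contDiff hf 3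
      have hpVg : ContDiff ℝ (⊤ : ℕ∞) (pV g) := by rw [pV_def]; exact pd_contDiff hg 3
      have hpvf : ContDiff ℝ (⊤ : ℕ∞) (pv f) := by rw [pv_def]; exact pd_contDiff hf 1
      have hpvg : ContDiff ℝ (⊤ : ℕ∞) (pv g) := by rw [pv_def]; exact pd_contDiff hg 1
      intro i j hij x
      rcases Nat.eq_zero_or_pos j with rfl | hj0
      case inr =>
          obtain ⟨j', rfl⟩ : ∃ j', j = j' + 1 := ⟨j - 1, by omega⟩
          have hstep : pV^[j' + 1] (fun y => f y * g y)
              = pV^[j'] (fun y => pV f y * g y + f y * pV g y) := by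
            rw [Function.iterate_succ_apply]
            congr 1
            funext y
            rw [pV_def]
            exact pd_mul hf hg 3 y
          rw [hstep, dd_add i j' (hpVf.mul hg) (hf.mul hpVg)]
          have harg : i + j' = n := by omega
          have hq1 : p' + (q' + 1) = n + 1 := by omega
          have hq2 : p' + 1 + q' = n + 1 := by omega
          have e1 := ih p' (q' + 1) (pV f) g hpVf hg (flat_pV hp) hq hq1 i j' harg x
          have e2 := ih (p' + 1) q' f (pV g) hf hpVg hp (flat_pV hq) hq2 i j' harg x
          rw [e1, e2, add_zero]
      case inl =>
          obtain ⟨i', rfl⟩ : ∃ i', i = i' + 1 := ⟨i - 1, by omega⟩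
          simp only [Function.iterate_zero, id_eq]
          rw [Function.iterate_succ_apply]
          have hstep : pv (fun y => f y * g y) = fun y => pv f y * g y + f y * pv g y := by
            funext y
            rw [pv_def]
            exact pd_mul hf hg 1 y
          rw [hstep]
          have hdd := dd_add i' 0 (hpvf.mul hg) (hf.mul hpvg)
          simp only [Function.iterate_zero, id_eq] at hdd
          rw [hdd x]
          have harg : i' + 0 = n := by omega
          have hq1 : p' + (q' + 1) = n + 1 := by omega
          have hq2 : p' + 1 + q' = n + 1 := by omega
          have e1 := ih p' (q' + 1) (pv f) g hpvf hg (flat_pv hf hp) hq hq1 i' 0 harg x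
          have e2 := ih (p' + 1) q' f (pv g) hf hpvg hp (flat_pv hg hq) hq2 i' 0 harg x
          simp only [Function.iterate_zero, id_eq] at e1 e2
          rw [e1, e2, add_zero]

lemma flat_cmul {m : ℕ} (c : ℝ) (hf : ContDiff ℝ (⊤ : ℕ∞) f) (h : Flat m f) :
    Flat m (fun y => c * f y) :=
  flat_mul m 1 m (fun _ => c) f contDiff_const hf (flat_one_const c) h (by omega)

end Mul

/-- if all pure third (v,V)-derivatives of A, B, C vanish and all
(v,V)-derivatives of η of total order m vanish, then all (v,V)-derivatives of order
m+1 of D'η and δη vanish. -/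
theorem stmt7 (A B C : Fn)
    (hA : ContDiff ℝ (⊤ : ℕ∞) A) (hB : ContDiff ℝ (⊤ : ℕ∞) B) (hC : ContDiff ℝ (⊤ : ℕ∞) C)
    (h3A : ∀ i j : ℕ, i + j = 3 → ∀ x, (pv^[i] (pV^[j] A)) x = 0)
    (h3B : ∀ i j : ℕ, i + j = 3 → ∀ x, (pv^[i] (pV^[j] B)) x = 0)
    (h3C : ∀ i j : ℕ, i + j = 3 → ∀ x, (pv^[i] (pV^[j] C)) x = 0)
    (m : ℕ) (hm : 1 ≤ m) (η : Fn) (hη : ContDiff ℝ (⊤ : ℕ∞) η)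
    (hηm : ∀ i j : ℕ, i + j = m → ∀ x, (pv^[i] (pV^[j] η)) x = 0) :
    ∀ i j : ℕ, i + j = m + 1 →
      (∀ x, (pv^[i] (pV^[j] (Dp A C η))) x = 0) ∧
      (∀ x, (pv^[i] (pV^[j] (delta B C η))) x = 0) := by
  obtain ⟨m', rfl⟩ : ∃ m', m = m' + 1 := ⟨m - 1, by omega⟩
  have hηf : Flat (m' + 1) η := hηm
  have hηf2 : Flat (m' + 2) η := flat_succ hηf
  have hpvη : ContDiff ℝ (⊤ : ℕ∞) (pv η) := by rw [pv_def]; exact pd_contDiff hη 1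
  have hpVη : ContDiff ℝ (⊤ : ℕ∞) (pV η) := by rw [pV_def]; exact pd_contDiff hη 3
  have fpv : Flat m' (pv η) := flat_pv hη hηf
  have fpV : Flat m' (pV η) := flat_pV hηf
  have hC2 : ContDiff ℝ (⊤ : ℕ∞) (fun y => (1/2 : ℝ) * C y) := contDiff_const.mul hC
  have fC2 : Flat 3 (fun y => (1/2 : ℝ) * C y) := flat_cmul _ hC h3C
  -- derivative-of-η terms
  have fpu : Flat (m' + 2) (pu η) := by
    intro i j hij x
    have h0 : pv^[i] (pV^[j] (pu η)) = pd 0 (pv^[i] (pV^[j] η)) := dd_pd i j 0 hη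
    rw [h0]
    exact pd_zero (hηf2 i j hij) 0 x
  have fpU : Flat (m' + 2) (pU η) := by
    intro i j hij x
    have h0 : pv^[i] (pV^[j] (pU η)) = pd 2 (pv^[i] (pV^[j] η)) := dd_pd i j 2 hη
    rw [h0]
    exact pd_zero (hηf2 i j hij) 2 x
  -- product terms
  have fT2 : Flat (m' + 2) (fun y => A y * pv η y) :=
    flat_mul (m' + 2) 3 m' A (pv η) hA hpvη h3A fpv (by omega)
  have fT3 : Flat (m' + 2) (fun y => (1/2 : ℝ) * C y * pV η y) :=
    flat_mul (m' + 2) 3 m' _ (pV η) hC2 hpVη fC2 fpV (by omega)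
  have fT2' : Flat (m' + 2) (fun y => B y * pV η y) :=
    flat_mul (m' + 2) 3 m' B (pV η) hB hpVη h3B fpV (by omega)
  have fT3' : Flat (m' + 2) (fun y => (1/2 : ℝ) * C y * pv η y) :=
    flat_mul (m' + 2) 3 m' _ (pv η) hC2 hpvη fC2 fpv (by omega)
  -- negated terms
  have hS2 : ContDiff ℝ (⊤ : ℕ∞) (fun y => A y * pv η y) := hA.mul hpvη
  have hS3 : ContDiff ℝ (⊤ : ℕ∞) (fun y => (1/2 : ℝ) * C y * pV η y) := hC2.mul hpVη
  have hS2' : ContDiff ℝ (⊤ : ℕ∞) (fun y => B y * pV η y) := hB.mul hpVη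
  have hS3' : ContDiff ℝ (⊤ : ℕ∞) (fun y => (1/2 : ℝ) * C y * pv η y) := hC2.mul hpvη
  have fN2 : Flat (m' + 2) (fun y => (-1 : ℝ) * (A y * pv η y)) := flat_cmul _ hS2 fT2
  have fN3 : Flat (m' + 2) (fun y => (-1 : ℝ) * ((1/2 : ℝ) * C y * pV η y)) :=
    flat_cmul _ hS3 fT3
  have fNU : Flat (m' + 2) (fun y => (-1 : ℝ) * pU η y) := flat_cmul _ (pd_contDiff hη 2) fpU
  -- assemble D'
  have hDp : Dp A C η
      = fun y => pu η y + ((-1 : ℝ) * (A y * pv η y) + (-1 : ℝ) * ((1/2 : ℝ) * C y * pV η y)) := by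
    funext y
    simp only [Dp]
    ring
  have hN2s : ContDiff ℝ (⊤ : ℕ∞) (fun y => (-1 : ℝ) * (A y * pv η y)) := contDiff_const.mul hS2
  have hN3s : ContDiff ℝ (⊤ : ℕ∞) (fun y => (-1 : ℝ) * ((1/2 : ℝ) * C y * pV η y)) :=
    contDiff_const.mul hS3
  have fDsum : Flat (m' + 2)
      (fun y => (-1 : ℝ) * (A y * pv η y) + (-1 : ℝ) * ((1/2 : ℝ) * C y * pV η y)) :=
    flat_add hN2s hN3s fN2 fN3
  have fDp : Flat (m' + 2) (Dp A C η) := by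
    rw [hDp]
    exact flat_add (pd_contDiff hη 0) (hN2s.add hN3s) fpu fDsum
  -- assemble δ
  have hdel : delta B C η
      = fun y => ((-1 : ℝ) * pU η y + B y * pV η y) + (1/2 : ℝ) * C y * pv η y := by
    funext y
    simp only [delta]
    ring
  have hNUs : ContDiff ℝ (⊤ : ℕ∞) (fun y => (-1 : ℝ) * pU η y) := contDiff_const.mul (pd_contDiff hη 2)
  have finner : Flat (m' + 2) (fun y => (-1 : ℝ) * pU η y + B y * pV η y) :=
    flat_add hNUs hS2' fNU fT2'
  have fdel : Flat (m' + 2) (delta B C η) := by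
    rw [hdel]
    exact flat_add (hNUs.add hS2') hS3' finner fT3'
  intro i j hij
  exact ⟨fun x => fDp i j (by omega) x, fun x => fdel i j (by omega) x⟩
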